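/- Let p be a prime, n, m, l ≥ 1, R = GR(p^n,m) = (ZMod (p^n))[X]/(f) for a monic basic irreducible f of degree m, ρ ∈ R[X] monic of degree l with reduction modulo (p) irreducible over the residue field R/(p), and S = R[X]/(ρ). Then the group of R-algebra automorphisms of S is cyclic of order l; moreover, it is generated by an automorphism σ that satisfies σ(y) = y^{p^m} for every y ∈ S with y^{p^{ml}} = y (i.e. σ acts as the p^m-th power map on the Teichmüller set of S). -/

import Mathlib

/-!
Let `S = R[X]/(ρ)` and `k = S/pS`, the field `(R/pR)[X]/(ρ̄)` with `p^(ml)` elements. Since `p` is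
nilpotent and `ρ̄` is separable, Newton iteration (Hensel's lemma modulo nilpotents) shows that
reduction is injective on the roots of `ρ` in `S` and that every root of `ρ̄` in `k` lifts. An
`R`-algebra endomorphism of `S` is determined by the image of the root, so `Aut_R(S)` embeds into
the at most `l` roots of `ρ̄` in `k`, and the lift of `root ↦ root^(p^m)` is an endomorphism `σ`
reducing to the Frobenius of `k / (R/pR)`, hence of order exactly `l`: it generates. Teichmüller
elements are roots of `X^(p^(ml)) - X`, whose derivative is a unit, so they too are determined by
their residues; comparing residues gives `σ y = y^(p^m)`.
-/

open Polynomial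

theorem isLocalHom_of_surjective_of_ker_le_nilradical {S T F : Type*} [CommRing S] [CommRing T]
    [FunLike F S T] [RingHomClass F S T] {π : F} (hπ : Function.Surjective π)
    (hker : RingHom.ker π ≤ nilradical S) : IsLocalHom π where
  map_nonunit z hz := by
    obtain ⟨w, hw⟩ := hz.exists_right_inv
    obtain ⟨w, rfl⟩ := hπ w
    have : IsNilpotent (z * w - 1) := hker (by simp [RingHom.mem_ker, hw])
    exact isUnit_of_mul_isUnit_left (by simpa using this.isUnit_add_one)

theorem Polynomial.Separable.isUnit_aeval_derivative {A B : Type*} [CommRing A] [CommRing B]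
    [Algebra A B] {P : A[X]} (hP : P.Separable) {x : B} (hx : aeval x P = 0) :
    IsUnit (aeval x (derivative P)) := by
  obtain ⟨u, v, huv⟩ := hP
  apply_fun aeval x at huv
  rw [map_add, map_mul, map_mul, hx, mul_zero, zero_add, map_one] at huv
  exact .of_mul_eq_one_right _ huv

theorem Polynomial.eq_of_isNilpotent_sub_of_aeval_eq_zero {A S : Type*} [CommRing A]
    [CommRing S] [Algebra A S] {P : A[X]} {a b : S} (hab : IsNilpotent (a - b))
    (ha : aeval a P = 0) (hb : aeval b P = 0) (hP : IsUnit (aeval a (derivative P))) : a = b := by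
  obtain ⟨r, -, hr⟩ := existsUnique_nilpotent_sub_and_aeval_eq_zero (ha ▸ IsNilpotent.zero) hP
  rw [hr a ⟨by simp, ha⟩, hr b ⟨hab, hb⟩]

theorem eq_of_isNilpotent_sub_of_pow_eq_self {S : Type*} [CommRing S] {Q : ℕ}
    (hQ : IsNilpotent (Q : S)) {y z : S} (hyz : IsNilpotent (y - z)) (hy : y ^ Q = y)
    (hz : z ^ Q = z) : y = z := by
  refine eq_of_isNilpotent_sub_of_aeval_eq_zero (P := (X ^ Q - X : S[X])) hyz
    (by simp [hy]) (by simp [hz]) ?_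
  have := (Commute.all (Q : S) (y ^ (Q - 1))).isNilpotent_mul_right hQ
  simpa [derivative_X_pow] using this.isUnit_sub_one

theorem ZMod.ker_castHom {d m : ℕ} (h : d ∣ m) :
    RingHom.ker (ZMod.castHom h (ZMod d)) = Ideal.span {(d : ZMod m)} := by
  have hsurj : Function.Surjective (Int.castRingHom (ZMod m)) := ZMod.intCast_surjective
  rw [← Ideal.map_comap_of_surjective _ hsurj (RingHom.ker _), RingHom.comap_ker,
    Subsingleton.elim ((castHom h (ZMod d)).comp (Int.castRingHom (ZMod m))) (Int.castRingHom _),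
    ZMod.ker_intCastRingHom, Ideal.map_span]
  simp

namespace AdjoinRoot

section Map

variable {A B : Type*} [CommRing A] [CommRing B]

theorem map_mk (φ : A →+* B) (f : A[X]) (q : B[X]) (h : q ∣ f.map φ) (g : A[X]) :
    map φ f q h (mk f g) = mk q (g.map φ) := by
  conv_rhs => rw [← aeval_eq, aeval_def, algebraMap_eq, eval₂_map]
  simp [map]

theorem map_surjective {φ : A →+* B} (hφ : Function.Surjective φ) (f : A[X]) :
    Function.Surjective (map φ f (f.map φ) dvd_rfl) := by
  intro z
  obtain ⟨g, rfl⟩ := mk_surjective z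
  obtain ⟨g, rfl⟩ := Polynomial.map_surjective φ hφ g
  exact ⟨mk f g, map_mk ..⟩

theorem ker_map {φ : A →+* B} (hφ : Function.Surjective φ) (f : A[X]) :
    RingHom.ker (map φ f (f.map φ) dvd_rfl) = (RingHom.ker φ).map (of f) := by
  refine le_antisymm (fun z hz => ?_) (Ideal.map_le_iff_le_comap.mpr fun a ha => ?_)
  · obtain ⟨g, rfl⟩ := mk_surjective z
    rw [RingHom.mem_ker, map_mk, mk_eq_zero] at hz
    obtain ⟨h, hh⟩ := hz
    obtain ⟨h, rfl⟩ := Polynomial.map_surjective φ hφ h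
    have hmem : g - f * h ∈ (RingHom.ker φ).map C := by
      rw [← ker_mapRingHom, RingHom.mem_ker, coe_mapRingHom, Polynomial.map_sub,
        Polynomial.map_mul, hh, sub_self]
    have := Ideal.mem_map_of_mem (mk f) hmem
    rwa [Ideal.map_map, map_sub, map_mul, mk_self, zero_mul, sub_zero] at this
  · simp_all [RingHom.mem_ker]

end Map

section Reduction

variable {R : Type*} [CommRing R] (I : Ideal R) (ρ : R[X])

noncomputable def reduction : AdjoinRoot ρ →ₐ[R] AdjoinRoot (ρ.map (Ideal.Quotient.mk I)) :=
  mapAlgHom (Ideal.Quotient.mkₐ R I) ρ _ dvd_rfl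

theorem reduction_surjective : Function.Surjective (reduction I ρ) :=
  map_surjective Ideal.Quotient.mk_surjective ρ

theorem ker_reduction : RingHom.ker (reduction I ρ) = I.map (of ρ) := by
  have := ker_map (Ideal.Quotient.mk_surjective (I := I)) ρ
  rwa [Ideal.mk_ker] at this

theorem reduction_aeval (x : AdjoinRoot ρ) (P : R[X]) :
    reduction I ρ (aeval x P) = aeval (reduction I ρ x) (P.map (Ideal.Quotient.mk I)) := by
  rw [← aeval_algHom_apply]
  exact (aeval_map_algebraMap (R ⧸ I) _ P).symm

variable {I ρ}

theorem ker_reduction_le_nilradical (hI : I ≤ nilradical R) :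
    RingHom.ker (reduction I ρ) ≤ nilradical (AdjoinRoot ρ) := by
  rw [ker_reduction, Ideal.map_le_iff_le_comap]
  exact fun a ha => mem_nilradical.mpr ((mem_nilradical.mp (hI ha)).map (of ρ))

theorem isUnit_aeval_derivative (hI : I ≤ nilradical R)
    (hsep : (ρ.map (Ideal.Quotient.mk I)).Separable) {x : AdjoinRoot ρ}
    (hx : reduction I ρ (aeval x ρ) = 0) : IsUnit (aeval x (derivative ρ)) := by
  refine (isLocalHom_of_surjective_of_ker_le_nilradical (reduction_surjective I ρ)
    (ker_reduction_le_nilradical hI)).map_nonunit _ ?_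
  rw [reduction_aeval, ← derivative_map]
  rw [reduction_aeval] at hx
  exact hsep.isUnit_aeval_derivative hx

theorem eq_of_reduction_eq (hI : I ≤ nilradical R)
    (hsep : (ρ.map (Ideal.Quotient.mk I)).Separable) {a b : AdjoinRoot ρ} (ha : aeval a ρ = 0)
    (hb : aeval b ρ = 0) (hab : reduction I ρ a = reduction I ρ b) : a = b :=
  eq_of_isNilpotent_sub_of_aeval_eq_zero
    (ker_reduction_le_nilradical hI (by rw [RingHom.mem_ker, map_sub, hab, sub_self])) ha hb
    (isUnit_aeval_derivative hI hsep (by rw [ha, map_zero]))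

theorem injective_reduction_apply_root (hI : I ≤ nilradical R)
    (hsep : (ρ.map (Ideal.Quotient.mk I)).Separable) :
    Function.Injective fun τ : AdjoinRoot ρ →ₐ[R] AdjoinRoot ρ => reduction I ρ (τ (root ρ)) :=
  fun _ _ h => algHom_ext <|
    eq_of_reduction_eq hI hsep (aeval_algHom_eq_zero ρ _) (aeval_algHom_eq_zero ρ _) h

variable [Fintype (R ⧸ I)]

theorem apply_eq_pow_card_of_pow_eq_self (hI : I ≤ nilradical R)
    {σ : AdjoinRoot ρ →ₐ[R] AdjoinRoot ρ}
    (hσ : ∀ x, reduction I ρ (σ x) = reduction I ρ x ^ Fintype.card (R ⧸ I)) {N : ℕ} (hN : N ≠ 0)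
    {y : AdjoinRoot ρ} (hy : y ^ Fintype.card (R ⧸ I) ^ N = y) :
    σ y = y ^ Fintype.card (R ⧸ I) := by
  have hq : IsNilpotent ((Fintype.card (R ⧸ I) ^ N : ℕ) : AdjoinRoot ρ) := by
    have hqI : (Fintype.card (R ⧸ I) : R) ∈ I := by
      rw [← Ideal.Quotient.eq_zero_iff_mem, map_natCast, Nat.cast_card_eq_zero]
    have := (mem_nilradical.mp (hI hqI)).map (of ρ)
    rw [map_natCast] at this
    exact_mod_cast this.pow_of_pos hN
  refine eq_of_isNilpotent_sub_of_pow_eq_self hq (ker_reduction_le_nilradical hI ?_)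
    (by rw [← map_pow, hy]) (by rw [← pow_mul, mul_comm, pow_mul, hy])
  rw [RingHom.mem_ker, map_sub, hσ, map_pow, sub_self]

variable [I.IsMaximal] [Fact (Irreducible (ρ.map (Ideal.Quotient.mk I)))]

open FiniteField in
theorem exists_reduction_apply_eq_pow_card (hI : I ≤ nilradical R) :
    ∃ σ : AdjoinRoot ρ →ₐ[R] AdjoinRoot ρ,
      ∀ x, reduction I ρ (σ x) = reduction I ρ x ^ Fintype.card (R ⧸ I) := by
  set q := Fintype.card (R ⧸ I)
  let := Ideal.Quotient.field I
  have hsep : (ρ.map (Ideal.Quotient.mk I)).Separable :=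
    PerfectField.separable_of_irreducible Fact.out
  let frob :=
    (frobeniusAlgHom (R ⧸ I) (AdjoinRoot (ρ.map (Ideal.Quotient.mk I)))).restrictScalars R
  have hx₀ : reduction I ρ (aeval (root ρ ^ q) ρ) = 0 := by
    rw [← aeval_algHom_apply, map_pow]
    change aeval (frob (reduction I ρ (root ρ))) ρ = 0
    rw [aeval_algHom_apply, aeval_algHom_apply, aeval_eq, mk_self, map_zero, map_zero]
  obtain ⟨r, hr, hroot⟩ := (existsUnique_nilpotent_sub_and_aeval_eq_zero
    (ker_reduction_le_nilradical hI hx₀) (isUnit_aeval_derivative hI hsep hx₀)).exists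
  obtain ⟨σ, hσ⟩ : ∃ σ : AdjoinRoot ρ →ₐ[R] AdjoinRoot ρ, σ (root ρ) = r :=
    ⟨liftAlgHom ρ (Algebra.ofId R _) r (by rwa [Algebra.toRingHom_ofId, ← aeval_def]),
      liftAlgHom_root ..⟩
  suffices (reduction I ρ).comp σ = frob.comp (reduction I ρ) from
    ⟨σ, fun x => DFunLike.congr_fun this x⟩
  refine algHom_ext ?_
  have : reduction I ρ (root ρ ^ q - r) = 0 := (hr.map (reduction I ρ)).eq_zero
  rw [map_sub, sub_eq_zero, map_pow] at this
  rw [AlgHom.comp_apply, hσ, ← this]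
  rfl

open FiniteField in
theorem orderOf_eq_natDegree_of_reduction_apply_eq_pow_card (hI : I ≤ nilradical R)
    {σ : AdjoinRoot ρ →ₐ[R] AdjoinRoot ρ}
    (hσ : ∀ x, reduction I ρ (σ x) = reduction I ρ x ^ Fintype.card (R ⧸ I)) :
    orderOf σ = (ρ.map (Ideal.Quotient.mk I)).natDegree := by
  let := Ideal.Quotient.field I
  have hirr : Irreducible (ρ.map (Ideal.Quotient.mk I)) := Fact.out
  let pb := powerBasis hirr.ne_zero
  have := pb.finite
  have : Finite (AdjoinRoot (ρ.map (Ideal.Quotient.mk I))) := Module.finite_of_finite (R ⧸ I)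
  let frob := frobeniusAlgHom (R ⧸ I) (AdjoinRoot (ρ.map (Ideal.Quotient.mk I)))
  have hpow : ∀ n x, reduction I ρ ((σ ^ n) x) = (frob ^ n) (reduction I ρ x) := by
    intro n
    induction n with
    | zero => exact fun _ => rfl
    | succ n ih =>
      intro x
      rw [pow_succ, AlgHom.mul_apply, ih, hσ, pow_succ, AlgHom.mul_apply]
      rfl
  rw [← powerBasis_dim hirr.ne_zero, ← pb.finrank, ← orderOf_frobeniusAlgHom]
  refine orderOf_eq_orderOf_iff.mpr fun n => ⟨fun h => AlgHom.ext fun z => ?_, fun h => ?_⟩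
  · obtain ⟨x, rfl⟩ := reduction_surjective I ρ z
    rw [← hpow, h]
    rfl
  · refine injective_reduction_apply_root hI (PerfectField.separable_of_irreducible hirr) ?_
    change reduction I ρ ((σ ^ n) (root ρ)) = reduction I ρ (root ρ)
    rw [hpow, show frob ^ n = 1 from h]
    rfl

theorem zpowers_eq_top_of_orderOf_eq_natDegree (hI : I ≤ nilradical R)
    {σ : AdjoinRoot ρ ≃ₐ[R] AdjoinRoot ρ}
    (hσ : orderOf σ = (ρ.map (Ideal.Quotient.mk I)).natDegree) : Subgroup.zpowers σ = ⊤ := by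
  let := Ideal.Quotient.field I
  have hirr : Irreducible (ρ.map (Ideal.Quotient.mk I)) := Fact.out
  let k := AdjoinRoot (ρ.map (Ideal.Quotient.mk I))
  have := (powerBasis hirr.ne_zero).finite
  have : Finite k := Module.finite_of_finite (R ⧸ I)
  have hinj : Function.Injective fun τ : AdjoinRoot ρ ≃ₐ[R] AdjoinRoot ρ =>
      reduction I ρ (τ (root ρ)) :=
    (injective_reduction_apply_root hI (PerfectField.separable_of_irreducible hirr)).comp
      AlgEquiv.coe_toAlgHom_injective
  have : Finite (AdjoinRoot ρ ≃ₐ[R] AdjoinRoot ρ) := Finite.of_injective _ hinj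
  let roots : (AdjoinRoot ρ ≃ₐ[R] AdjoinRoot ρ) → (ρ.map (Ideal.Quotient.mk I)).rootSet k :=
    fun τ => ⟨reduction I ρ (τ (root ρ)), by
      rw [mem_rootSet_of_ne hirr.ne_zero, ← reduction_aeval]
      exact (congrArg _ (aeval_algHom_eq_zero ρ τ.toAlgHom)).trans (map_zero _)⟩
  refine Subgroup.eq_top_of_le_card _ ?_
  calc Nat.card (AdjoinRoot ρ ≃ₐ[R] AdjoinRoot ρ)
      ≤ Nat.card ((ρ.map (Ideal.Quotient.mk I)).rootSet k) :=
        Nat.card_le_card_of_injective roots fun _ _ h => hinj (congrArg Subtype.val h)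
    _ ≤ (ρ.map (Ideal.Quotient.mk I)).natDegree :=
        (Nat.card_coe_set_eq _).trans_le (ncard_rootSet_le _ _)
    _ = Nat.card (Subgroup.zpowers σ) := by rw [Nat.card_zpowers, hσ]

theorem exists_algEquiv_orderOf_eq_natDegree_zpowers_eq_top (hI : I ≤ nilradical R) :
    ∃ σ : AdjoinRoot ρ ≃ₐ[R] AdjoinRoot ρ,
      orderOf σ = (ρ.map (Ideal.Quotient.mk I)).natDegree ∧ Subgroup.zpowers σ = ⊤ ∧
      ∀ y : AdjoinRoot ρ, y ^ Fintype.card (R ⧸ I) ^ (ρ.map (Ideal.Quotient.mk I)).natDegree = y →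
        σ y = y ^ Fintype.card (R ⧸ I) := by
  let := Ideal.Quotient.field I
  have hl : (ρ.map (Ideal.Quotient.mk I)).natDegree ≠ 0 := (Irreducible.natDegree_pos Fact.out).ne'
  obtain ⟨σ, hσ⟩ := exists_reduction_apply_eq_pow_card (ρ := ρ) hI
  have hord := orderOf_eq_natDegree_of_reduction_apply_eq_pow_card hI hσ
  have hunit : IsUnit σ := .of_pow_eq_one (pow_orderOf_eq_one σ) (hord ▸ hl)
  have hord' : orderOf (AlgEquiv.algHomUnitsEquiv R _ hunit.unit) =
      (ρ.map (Ideal.Quotient.mk I)).natDegree := by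
    rw [MulEquiv.orderOf_eq, ← orderOf_units, hunit.unit_spec, hord]
  exact ⟨_, hord', zpowers_eq_top_of_orderOf_eq_natDegree hI hord',
    fun y hy => apply_eq_pow_card_of_pow_eq_self hI hσ hl hy⟩

end Reduction

section GaloisRing

theorem ker_map_castHom {d N : ℕ} (h : d ∣ N) (f : (ZMod N)[X]) :
    RingHom.ker (map (ZMod.castHom h (ZMod d)) f _ dvd_rfl) = Ideal.span {(d : AdjoinRoot f)} := by
  rw [ker_map (ZMod.ringHom_surjective _), ZMod.ker_castHom, Ideal.map_span, Set.image_singleton,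
    map_natCast]

theorem isMaximal_span_natCast {d N : ℕ} (h : d ∣ N) (f : (ZMod N)[X]) [Fact d.Prime]
    [Fact (Irreducible (f.map (ZMod.castHom h (ZMod d))))] :
    (Ideal.span {(d : AdjoinRoot f)}).IsMaximal :=
  ker_map_castHom h f ▸
    RingHom.ker_isMaximal_of_surjective _ (map_surjective (ZMod.ringHom_surjective _) f)

theorem natCard_quotient_span_natCast {d N : ℕ} [Fact (1 < d)] (h : d ∣ N) {f : (ZMod N)[X]}
    (hf : f.Monic) :
    Nat.card (AdjoinRoot f ⧸ Ideal.span {(d : AdjoinRoot f)}) = d ^ f.natDegree := by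
  let e := (Ideal.quotEquivOfEq (ker_map_castHom h f).symm).trans
    (RingHom.quotientKerEquivOfSurjective (map_surjective (ZMod.ringHom_surjective
      (ZMod.castHom h (ZMod d))) f))
  let pb := powerBasis' (hf.map (ZMod.castHom h (ZMod d)))
  rw [Nat.card_congr (e.toEquiv.trans pb.basis.equivFun.toEquiv), Nat.card_fun, Nat.card_zmod,
    Nat.card_fin, powerBasis'_dim, hf.natDegree_map]

end GaloisRing

end AdjoinRoot

theorem galois_ring_automorphism_group_cyclic_general (p n m l : ℕ) (hp : p.Prime)
    (hn : 0 < n)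
    (f : Polynomial (ZMod (p ^ n))) (hf : f.Monic) (hdeg : f.natDegree = m)
    (hirr : Irreducible (f.map (ZMod.castHom (dvd_pow_self p hn.ne') (ZMod p))))
    (ρ : Polynomial (AdjoinRoot f)) (hρ : ρ.Monic) (hρdeg : ρ.natDegree = l)
    (hρirr : Irreducible
      (ρ.map (Ideal.Quotient.mk (Ideal.span {(p : AdjoinRoot f)})))) :
    ∃ σ : AdjoinRoot ρ ≃ₐ[AdjoinRoot f] AdjoinRoot ρ,
      orderOf σ = l ∧
      (∀ τ : AdjoinRoot ρ ≃ₐ[AdjoinRoot f] AdjoinRoot ρ, τ ∈ Subgroup.zpowers σ) ∧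
      (∀ y : AdjoinRoot ρ, y ^ p ^ (m * l) = y → σ y = y ^ p ^ m) := by
  have := Fact.mk hp
  have := Fact.mk hirr
  have := Fact.mk hρirr
  have := AdjoinRoot.isMaximal_span_natCast (dvd_pow_self p hn.ne') f
  have hcard := AdjoinRoot.natCard_quotient_span_natCast (dvd_pow_self p hn.ne') hf
  have : Finite (AdjoinRoot f ⧸ Ideal.span {(p : AdjoinRoot f)}) :=
    Nat.finite_of_card_ne_zero (hcard ▸ pow_ne_zero _ hp.ne_zero)
  have := Fintype.ofFinite (AdjoinRoot f ⧸ Ideal.span {(p : AdjoinRoot f)})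
  have hI : Ideal.span {(p : AdjoinRoot f)} ≤ nilradical (AdjoinRoot f) := by
    rw [Ideal.span_le, Set.singleton_subset_iff, SetLike.mem_coe, mem_nilradical]
    refine ⟨n, ?_⟩
    rw [← Nat.cast_pow, ← map_natCast (AdjoinRoot.of f), ZMod.natCast_self, map_zero]
  obtain ⟨σ, hord, htop, hteich⟩ :=
    AdjoinRoot.exists_algEquiv_orderOf_eq_natDegree_zpowers_eq_top (ρ := ρ) hI
  rw [hρ.natDegree_map, hρdeg] at hord hteich
  rw [Fintype.card_eq_nat_card, hcard, hdeg, ← pow_mul] at hteich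
  exact ⟨σ, hord, fun τ => htop ▸ Subgroup.mem_top τ, hteich⟩

/-- Let `R = GR(p^n, m)` and `S = R[X]/(ρ) = GR(p^n, m*l)` for a monic
`ρ` of degree `l` whose reduction mod `(p)` is irreducible over `R/(p)`. Then the group of
`R`-algebra automorphisms of `S` is cyclic of order `l`, generated by an automorphism `σ`
that acts as the `p^m`-th power map on the Teichmüller set `{y : y ^ (p^(m*l)) = y}`. -/
theorem galois_ring_automorphism_group_cyclic (p n m l : ℕ) (hp : p.Prime)
    (hn : 0 < n) (hm : 0 < m) (hl : 0 < l)
    (f : Polynomial (ZMod (p ^ n))) (hf : f.Monic) (hdeg : f.natDegree = m)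
    (hirr : Irreducible (f.map (ZMod.castHom (dvd_pow_self p hn.ne') (ZMod p))))
    (ρ : Polynomial (AdjoinRoot f)) (hρ : ρ.Monic) (hρdeg : ρ.natDegree = l)
    (hρirr : Irreducible
      (ρ.map (Ideal.Quotient.mk (Ideal.span {(p : AdjoinRoot f)})))) :
    ∃ σ : AdjoinRoot ρ ≃ₐ[AdjoinRoot f] AdjoinRoot ρ,
      orderOf σ = l ∧
      (∀ τ : AdjoinRoot ρ ≃ₐ[AdjoinRoot f] AdjoinRoot ρ, τ ∈ Subgroup.zpowers σ) ∧
      (∀ y : AdjoinRoot ρ, y ^ p ^ (m * l) = y → σ y = y ^ p ^ m) :=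
  galois_ring_automorphism_group_cyclic_general p n m l hp hn f hf hdeg hirr ρ hρ hρdeg hρirr
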